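/- arXiv:2211.08145 — 6 statements merged into one kernel-verified Lean document; each statement's English description precedes it below -/
import Mathlib

section
/- Let G be a countable group acting continuously on a compact metrizable zero-dimensional space X, and suppose the action has shadowing with respect to a compatible metric on X. Then every symbolic factor of the action is sofic: for every finite set A with at least two elements and every continuous G-equivariant map φ : X → A^G (where A^G carries the shift action), the image φ(X), which is a subshift of A^G, is sofic. -/
open Topology

/-- The Cantor space `𝒞`. -/
abbrev Cantor : Type := ℕ → Bool

/-- `α : G → C(𝒞,𝒞)` is a continuous action if it is a homomorphism into the
self-homeomorphisms of `𝒞` (recorded as continuous maps; continuity of the inverse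
`α g⁻¹` is automatic from the homomorphism equations). -/
def IsAction (G : Type) [Group G] (α : G → C(Cantor, Cantor)) : Prop :=
  α 1 = ContinuousMap.id Cantor ∧ ∀ g h : G, α (g * h) = (α g).comp (α h)

/-- The space `Act_G(𝒞)` of continuous actions of `G` on the Cantor space,
topologized as a subspace of `C(𝒞,𝒞)^G` (compact-open topology on each factor). -/
abbrev ActSpace (G : Type) [Group G] : Type :=
  {α : G → C(Cantor, Cantor) // IsAction G α}

/-- The conjugacy class of an action `α` under the conjugation action of `Homeo(𝒞)`. -/
def conjClass {G : Type} [Group G] (α : ActSpace G) : Set (ActSpace G) :=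
  {β | ∃ φ : Cantor ≃ₜ Cantor, ∀ g : G,
    (β.1 g : Cantor → Cantor) = φ ∘ (α.1 g : Cantor → Cantor) ∘ φ.symm}

/-- The strong topological Rokhlin property: some action on the Cantor space has a
comeager conjugacy class. -/
def HasSTRP (G : Type) [Group G] : Prop :=
  ∃ α : ActSpace G, conjClass α ∈ residual (ActSpace G)

/-- The shift action of `G` on `A^G`: `(g • x)(h) = x(g⁻¹h)`. -/
def shift {G : Type} [Group G] {A : Type} (g : G) (x : G → A) : G → A :=
  fun h => x (g⁻¹ * h)

/-- A subshift: closed (in the product of discrete topologies) and shift-invariant. -/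
def IsSubshift (G : Type) [Group G] (A : Type) (X : Set (G → A)) : Prop :=
  (letI : TopologicalSpace A := ⊥; IsClosed X) ∧ ∀ g : G, ∀ x ∈ X, shift g x ∈ X

/-- The set `X_F` of `F`-patterns of `X`. -/
def patterns {G A : Type} (F : Finset G) (X : Set (G → A)) : Set (F → A) :=
  (fun (x : G → A) (f : F) => x (f : G)) '' X

/-- Subshift of finite type, with defining window `E` and allowed patterns `𝔽`. -/
def IsSFT (G : Type) [Group G] (A : Type) (X : Set (G → A)) : Prop :=
  ∃ (E : Finset G) (𝔽 : Set (E → A)),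
    ∀ x : G → A, x ∈ X ↔ ∀ g : G, (fun e : E => shift g x (e : G)) ∈ 𝔽

/-- Continuity on a set, for a map between full shift spaces over discrete alphabets. -/
def ContinuousOnD {G A B : Type} (ψ : (G → B) → (G → A)) (Z : Set (G → B)) : Prop :=
  letI : TopologicalSpace A := ⊥
  letI : TopologicalSpace B := ⊥
  ContinuousOn ψ Z

/-- `G`-equivariance of a map between shift spaces, on a set. -/
def EquivariantOn {G A B : Type} [Group G] (ψ : (G → B) → (G → A)) (Z : Set (G → B)) : Prop :=
  ∀ g : G, ∀ z ∈ Z, ψ (shift g z) = shift g (ψ z)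

/-- A sofic subshift: a continuous `G`-equivariant image of a subshift of finite type. -/
def IsSofic (G : Type) [Group G] (A : Type) (X : Set (G → A)) : Prop :=
  ∃ (B : Type) (_ : Fintype B) (_ : Nontrivial B) (Z : Set (G → B))
    (ψ : (G → B) → (G → A)),
    IsSubshift G B Z ∧ IsSFT G B Z ∧ ContinuousOnD ψ Z ∧ EquivariantOn ψ Z ∧ ψ '' Z = X

/-- The sliding block code `Φ(y)(g) = f(d ↦ y(g·d))` induced by `f : (D → B) → A`. -/
def slidingBlock {G : Type} [Group G] {A B : Type} (D : Finset G)
    (f : (D → B) → A) : (G → B) → (G → A) :=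
  fun y g => f (fun d => y (g * (d : G)))

/-- A projectively isolated subshift. -/
def ProjIsolated (G : Type) [Group G] (A : Type) (X : Set (G → A)) : Prop :=
  ∃ (B : Type) (_ : Fintype B) (_ : Nontrivial B) (Y : Set (G → B))
    (F D : Finset G) (f : (D → B) → A),
    IsSubshift G B Y ∧
    slidingBlock D f '' Y = X ∧
    ∀ Z : Set (G → B), IsSubshift G B Z → patterns F Z = patterns F Y →
      slidingBlock D f '' Z = X

/-- An isolated subshift: an SFT `X` such that for some finite `F ⊆ G` no proper
subshift has the same `F`-patterns as `X`. -/
def IsIsolated (G : Type) [Group G] (A : Type) (X : Set (G → A)) : Prop :=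
  IsSFT G A X ∧ ∃ F : Finset G, ∀ Y : Set (G → A),
    IsSubshift G A Y → Y ⊂ X → patterns F Y ≠ patterns F X

/-- A strongly projectively isolated subshift: a continuous `G`-equivariant image of an
isolated subshift. -/
def StronglyProjIsolated (G : Type) [Group G] (A : Type) (X : Set (G → A)) : Prop :=
  ∃ (B : Type) (_ : Fintype B) (_ : Nontrivial B) (Y : Set (G → B))
    (ψ : (G → B) → (G → A)),
    IsSubshift G B Y ∧ IsIsolated G B Y ∧
    ContinuousOnD ψ Y ∧ EquivariantOn ψ Y ∧ ψ '' Y = X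

/-- Shadowing (the pseudo-orbit tracing property) of an action `act` of `G`,
with respect to a distance function `d`. -/
def HasShadowing {G X : Type} [Group G] (d : X → X → ℝ) (act : G → X → X) : Prop :=
  ∀ ε : ℝ, 0 < ε → ∃ (δ : ℝ) (S : Finset G), 0 < δ ∧
    ∀ x : G → X, (∀ g : G, ∀ s ∈ S, d (act s (x g)) (x (s * g)) < δ) →
      ∃ y : X, ∀ g : G, d (x g) (act g y) < ε

/-- A finite partition of the whole space into nonempty clopen sets. -/
def IsClopenPartition {X : Type} [TopologicalSpace X] (parts : Finset (Set X)) : Prop :=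
  (∀ P ∈ parts, IsClopen P ∧ P.Nonempty) ∧
  (∀ P ∈ parts, ∀ Q ∈ parts, P ≠ Q → Disjoint P Q) ∧
  (⋃ P ∈ parts, P) = Set.univ

/-- A finite partition of a subshift `X` into nonempty subsets that are clopen in `X`. -/
def IsClopenPartitionIn {G A : Type} (X : Set (G → A)) (parts : Finset (Set (G → A))) : Prop :=
  (letI : TopologicalSpace A := ⊥;
    ∀ P ∈ parts, P.Nonempty ∧ P ⊆ X ∧ IsClopen (Subtype.val ⁻¹' P : Set X)) ∧
  (∀ P ∈ parts, ∀ Q ∈ parts, P ≠ Q → Disjoint P Q) ∧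
  (⋃ P ∈ parts, P) = X

/-- `X` is `fam`-minimal: no nonempty proper subshift of `X` meets every member of `fam`. -/
def AMinimal {G A : Type} [Group G] (X : Set (G → A)) (fam : Set (Set (G → A))) : Prop :=
  ¬ ∃ Y : Set (G → A), IsSubshift G A Y ∧ Y.Nonempty ∧ Y ⊂ X ∧
    ∀ S ∈ fam, (Y ∩ S).Nonempty

/-- The free product of a subshift `V ⊆ B^G` and a subshift `W ⊆ B^H`, a subshift
of `B^(G∗H)`. -/
def freeProd {G H B : Type} [Group G] [Group H]
    (V : Set (G → B)) (W : Set (H → B)) : Set (Monoid.Coprod G H → B) :=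
  {x | ∀ g : Monoid.Coprod G H,
    (fun h : G => x (g * Monoid.Coprod.inl h)) ∈ V ∧
    (fun k : H => x (g * Monoid.Coprod.inr k)) ∈ W}

/-- Continuity of a map into a finite (discrete) alphabet. -/
def ContinuousToDiscrete {X A : Type} [TopologicalSpace X] (c : X → A) : Prop :=
  letI : TopologicalSpace A := ⊥
  Continuous c

/-- Continuity of a map into the shift space `A^G` over a discrete alphabet `A`. -/
def ContinuousIntoShift {X G A : Type} [TopologicalSpace X] (φ : X → (G → A)) : Prop :=
  letI : TopologicalSpace A := ⊥
  Continuous φ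

-- auxiliary lemma placed above the theorem
lemma exists_clopen_partition_aux (X : Type) [MetricSpace X] [CompactSpace X]
    [TotallyDisconnectedSpace X] [Nonempty X] (r : ℝ) (hr : 0 < r) :
    ∃ (ι : Type) (_ : Fintype ι) (_ : Nonempty ι) (P : ι → Set X),
      (∀ i, IsClopen (P i)) ∧ (∀ i, (P i).Nonempty) ∧
      (∀ i, ∀ x ∈ P i, ∀ y ∈ P i, dist x y < r) ∧
      (Pairwise fun i j => Disjoint (P i) (P j)) ∧ (⋃ i, P i) = Set.univ := by
  have hV : ∀ x : X, ∃ V : Set X, IsClopen V ∧ x ∈ V ∧ V ⊆ Metric.ball x (r / 2) := fun x =>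
    compact_exists_isClopen_in_isOpen Metric.isOpen_ball (Metric.mem_ball_self (by linarith))
  choose V hVclopen hVmem hVsub using hV
  obtain ⟨t, ht⟩ := isCompact_univ.elim_finite_subcover V (fun x => (hVclopen x).2)
    (fun x _ => Set.mem_iUnion.2 ⟨x, hVmem x⟩)
  classical
  let n := Fintype.card {x // x ∈ t}
  let e : Fin n ≃ {x // x ∈ t} := (Fintype.equivFin _).symm
  let W : Fin n → Set X := fun i => V (e i)
  have hWclopen : ∀ i, IsClopen (W i) := fun i => hVclopen _
  let Q : Fin n → Set X := fun i => W i \ ⋃ j ∈ Finset.univ.filter (· < i), W j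
  have hQclopen : ∀ i, IsClopen (Q i) :=
    fun i => (hWclopen i).diff (isClopen_biUnion_finset fun j _ => hWclopen j)
  have hQsub : ∀ i, Q i ⊆ W i := fun i => Set.diff_subset
  have hQsmall : ∀ i, ∀ x ∈ Q i, ∀ y ∈ Q i, dist x y < r := by
    intro i x hx y hy
    have hx' := hVsub _ (hQsub i hx)
    have hy' := hVsub _ (hQsub i hy)
    rw [Metric.mem_ball] at hx' hy'
    calc dist x y ≤ dist x (e i : X) + dist (e i : X) y := dist_triangle _ _ _
      _ < r / 2 + r / 2 := by rw [dist_comm (e i : X) y]; exact add_lt_add hx' hy'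
      _ = r := by ring
  have hQdisj : Pairwise fun i j => Disjoint (Q i) (Q j) := by
    intro i j hij
    rcases lt_or_gt_of_ne hij with h | h
    · exact Set.disjoint_left.2 fun x hxi hxj =>
        hxj.2 (Set.mem_biUnion (Finset.mem_filter.2 ⟨Finset.mem_univ _, h⟩) hxi.1)
    · exact Set.disjoint_left.2 fun x hxi hxj =>
        hxi.2 (Set.mem_biUnion (Finset.mem_filter.2 ⟨Finset.mem_univ _, h⟩) hxj.1)
  have hQunion : (⋃ i, Q i) = Set.univ := by
    apply Set.eq_univ_of_forall
    intro x
    have hx : ∃ i : Fin n, x ∈ W i := by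
      have := ht (Set.mem_univ x)
      rw [Set.mem_iUnion₂] at this
      obtain ⟨a, ha, hxa⟩ := this
      exact ⟨e.symm ⟨a, ha⟩, by simpa [W] using hxa⟩
    obtain ⟨i, hi, hmin⟩ := Finset.exists_min_image (Finset.univ.filter (x ∈ W ·))
      id ⟨hx.choose, Finset.mem_filter.2 ⟨Finset.mem_univ _, hx.choose_spec⟩⟩
    refine Set.mem_iUnion.2 ⟨i, (Finset.mem_filter.1 hi).2, ?_⟩
    intro hxU
    rw [Set.mem_iUnion₂] at hxU
    obtain ⟨j, hj, hxj⟩ := hxU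
    have := hmin j (Finset.mem_filter.2 ⟨Finset.mem_univ _, hxj⟩)
    exact absurd ((Finset.mem_filter.1 hj).2) (not_lt.2 this)
  refine ⟨{i : Fin n // (Q i).Nonempty}, inferInstance, ?_, fun i => Q i.1,
    fun i => hQclopen i.1, fun i => i.2, fun i => hQsmall i.1,
    fun i j hij => hQdisj (fun h => hij (Subtype.ext h)), ?_⟩
  · obtain ⟨x⟩ := ‹Nonempty X›
    obtain ⟨i, hi⟩ := Set.mem_iUnion.1 (hQunion ▸ Set.mem_univ x)
    exact ⟨⟨i, ⟨x, hi⟩⟩⟩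
  · apply Set.eq_univ_of_forall
    intro x
    obtain ⟨i, hi⟩ := Set.mem_iUnion.1 (hQunion ▸ Set.mem_univ x)
    exact Set.mem_iUnion.2 ⟨⟨i, ⟨x, hi⟩⟩, hi⟩

/-- If a continuous action of a countable group on a compact metrizable
zero-dimensional space has shadowing, then every symbolic factor of it is sofic. -/
theorem symbolic_factor_of_shadowing_is_sofic (G : Type) [Group G] [Countable G]
    (X : Type) [MetricSpace X] [CompactSpace X] [TotallyDisconnectedSpace X]
    (act : G → X → X) (hone : act 1 = id)
    (hmul : ∀ g h : G, act (g * h) = act g ∘ act h)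
    (hcont : ∀ g : G, Continuous (act g))
    (hshad : HasShadowing (fun x y => dist x y) act)
    (A : Type) [Fintype A] [Nontrivial A]
    (φ : X → (G → A)) (hφcont : ContinuousIntoShift φ)
    (hφequiv : ∀ (g : G) (x : X), φ (act g x) = shift g (φ x)) :
    IsSofic G A (φ '' Set.univ) := by
  classical
  by_cases hX : Nonempty X
  case neg =>
    haveI : IsEmpty X := not_nonempty_iff.1 hX
    have himg : φ '' Set.univ = (∅ : Set (G → A)) := by
      simp [Set.univ_eq_empty_iff.2 ‹IsEmpty X›]
    rw [himg]
    haveI : Nonempty A := Nontrivial.to_nonempty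
    refine ⟨Bool, inferInstance, inferInstance, ∅, fun _ _ => Classical.arbitrary A,
      ⟨isClosed_empty, fun g x hx => hx.elim⟩,
      ⟨{1}, ∅, fun x => ⟨fun h => h.elim, fun h => ((h 1).elim)⟩⟩,
      fun x hx => hx.elim, fun g z hz => hz.elim, Set.image_empty _⟩
  case pos =>
  haveI := hX
  haveI : Nonempty A := Nontrivial.to_nonempty
  -- the coding map at the identity coordinate
  set c : X → A := fun x => φ x 1 with hc_def
  have hc_eval : ∀ (y : X) (g : G), c (act g⁻¹ y) = φ y g := by
    intro y g
    have h := hφequiv g⁻¹ y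
    calc c (act g⁻¹ y) = φ (act g⁻¹ y) 1 := rfl
      _ = shift g⁻¹ (φ y) 1 := by rw [h]
      _ = φ y g := by simp [shift]
  -- Lebesgue number for the fibers of c
  have hlocal : ∃ ε₀ : ℝ, 0 < ε₀ ∧ ∀ x y : X, dist x y < ε₀ → c x = c y := by
    letI : TopologicalSpace A := ⊥
    haveI : DiscreteTopology A := ⟨rfl⟩
    have hφc : Continuous φ := hφcont
    have hcc : Continuous c := (continuous_apply (1 : G)).comp hφc
    have hopen : ∀ a : A, IsOpen (c ⁻¹' {a}) := fun a => (isOpen_discrete _).preimage hcc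
    obtain ⟨ε₀, hε₀, hball⟩ := lebesgue_number_lemma_of_metric (s := (Set.univ : Set X))
      isCompact_univ hopen (fun x _ => Set.mem_iUnion.2 ⟨c x, rfl⟩)
    refine ⟨ε₀, hε₀, fun x y hxy => ?_⟩
    obtain ⟨a, ha⟩ := hball x (Set.mem_univ x)
    have hx : c x = a := ha (Metric.mem_ball_self hε₀)
    have hy : c y = a := ha (by rwa [Metric.mem_ball, dist_comm])
    rw [hx, hy]
  obtain ⟨ε₀, hε₀, hc_const⟩ := hlocal
  obtain ⟨δ, S, hδ, hshadow⟩ := hshad (ε₀ / 2) (by linarith)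
  set r := min (δ / 2) (ε₀ / 2) with hr_def
  have hr : 0 < r := lt_min (by linarith) (by linarith)
  have hrδ : r ≤ δ / 2 := min_le_left _ _
  have hrε2 : r ≤ ε₀ / 2 := min_le_right _ _
  obtain ⟨ι, _inst1, _inst2, P, hPclopen, hPne, hPsmall, hPdisj, hPunion⟩ :=
    exists_clopen_partition_aux X r hr
  haveI := _inst1; haveI := _inst2
  have hidx : ∀ x : X, ∃ i, x ∈ P i := fun x => Set.mem_iUnion.1 (hPunion ▸ Set.mem_univ x)
  choose idx hidx_mem using hidx
  choose pt hpt using hPne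
  have hc_part : ∀ i, ∀ x ∈ P i, c x = c (pt i) := fun i x hx =>
    hc_const x (pt i) (lt_of_lt_of_le (hPsmall i x hx (pt i) (hpt i)) (by linarith))
  -- the SFT over the alphabet B = Option ι
  let E : Finset G := insert (1 : G) (S.image (·⁻¹))
  have h1E : (1 : G) ∈ E := Finset.mem_insert_self _ _
  have hsE : ∀ s ∈ S, s⁻¹ ∈ E := fun s hs => Finset.mem_insert_of_mem (Finset.mem_image_of_mem _ hs)
  let 𝔽 : Set (E → Option ι) :=
    {p | ∃ q : E → ι, (∀ e, p e = some (q e)) ∧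
      ∃ w ∈ P (q ⟨1, h1E⟩), ∀ s : G, ∀ hs : s ∈ S,
        ∃ u ∈ P (q ⟨s⁻¹, hsE s hs⟩), dist (act s w) u < δ / 2}
  let Z : Set (G → Option ι) := {z | ∀ g : G, (fun e : E => shift g z (e : G)) ∈ 𝔽}
  let f : Option ι → A := fun b => Option.elim b (Classical.arbitrary A) (fun i => c (pt i))
  let ψ : (G → Option ι) → (G → A) := fun z g => f (z g)
  have hZ_struct : ∀ z ∈ Z, ∀ h : G, ∃ i : ι, z h = some i ∧ ∃ w ∈ P i,
      ∀ s ∈ S, ∃ j : ι, ∃ u ∈ P j, z (h * s⁻¹) = some j ∧ dist (act s w) u < δ / 2 := by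
    intro z hz h
    obtain ⟨q, hq, w, hw, hws⟩ := hz h⁻¹
    refine ⟨q ⟨1, h1E⟩, ?_, w, hw, fun s hs => ?_⟩
    · have h1 := hq ⟨1, h1E⟩
      simpa [shift] using h1
    · obtain ⟨u, hu, hdu⟩ := hws s hs
      refine ⟨q ⟨s⁻¹, hsE s hs⟩, u, hu, ?_, hdu⟩
      have h2 := hq ⟨s⁻¹, hsE s hs⟩
      simpa [shift] using h2
  refine ⟨Option ι, inferInstance, inferInstance, Z, ψ, ⟨?_, ?_⟩,
    ⟨E, 𝔽, fun x => Iff.rfl⟩, ?_, fun g z _ => rfl, ?_⟩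
  · -- Z is closed
    letI : TopologicalSpace (Option ι) := ⊥
    haveI : DiscreteTopology (Option ι) := ⟨rfl⟩
    have hZeq : Z = ⋂ g : G, (fun z : G → Option ι => fun e : E => z (g⁻¹ * (e : G))) ⁻¹' 𝔽 := by
      ext z
      simp only [Z, Set.mem_setOf_eq, Set.mem_iInter, Set.mem_preimage]
      exact Iff.rfl
    rw [hZeq]
    exact isClosed_iInter fun g => IsClosed.preimage
      (continuous_pi fun e => continuous_apply _) (isClosed_discrete _)
  · -- Z is shift-invariant
    intro g z hz h
    have key : (fun e : E => shift h (shift g z) (e : G)) =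
        (fun e : E => shift (h * g) z (e : G)) := by
      funext e; simp [shift, mul_inv_rev, mul_assoc]
    rw [key]
    exact hz (h * g)
  · -- ψ is continuous
    letI tA : TopologicalSpace A := ⊥
    letI tB : TopologicalSpace (Option ι) := ⊥
    haveI : DiscreteTopology (Option ι) := ⟨rfl⟩
    exact Continuous.continuousOn (continuous_pi fun g =>
      (continuous_of_discreteTopology : Continuous f).comp (continuous_apply g))
  · -- ψ '' Z = φ '' univ
    apply Set.Subset.antisymm
    · rintro a ⟨z, hz, rfl⟩
      have hzs := hZ_struct z hz
      choose i hi w hw hS using hzs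
      have hpseudo : ∀ g : G, ∀ s ∈ S, dist (act s (w g⁻¹)) (w (s * g)⁻¹) < δ := by
        intro g s hs
        obtain ⟨j, u, hu, hzj, hdu⟩ := hS g⁻¹ s hs
        rw [show (s * g)⁻¹ = g⁻¹ * s⁻¹ from mul_inv_rev s g]
        have h1 := hi (g⁻¹ * s⁻¹)
        have hj : j = i (g⁻¹ * s⁻¹) := Option.some_injective ι (hzj.symm.trans h1)
        have hw2 : w (g⁻¹ * s⁻¹) ∈ P j := by rw [hj]; exact hw _
        calc dist (act s (w g⁻¹)) (w (g⁻¹ * s⁻¹))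
            ≤ dist (act s (w g⁻¹)) u + dist u (w (g⁻¹ * s⁻¹)) := dist_triangle _ _ _
          _ < δ / 2 + δ / 2 :=
              add_lt_add hdu (lt_of_lt_of_le (hPsmall j u hu _ hw2) hrδ)
          _ = δ := by ring
      obtain ⟨y, hy⟩ := hshadow (fun g => w g⁻¹) hpseudo
      refine ⟨y, Set.mem_univ y, ?_⟩
      funext g
      have hd1 : dist (w g) (act g⁻¹ y) < ε₀ / 2 := by
        have h := hy g⁻¹
        simpa using h
      have hd2 : dist (w g) (pt (i g)) < ε₀ / 2 :=
        lt_of_lt_of_le (hPsmall (i g) _ (hw g) _ (hpt (i g))) hrε2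
      have hdy : dist (act g⁻¹ y) (pt (i g)) < ε₀ := by
        calc dist (act g⁻¹ y) (pt (i g))
            ≤ dist (act g⁻¹ y) (w g) + dist (w g) (pt (i g)) := dist_triangle _ _ _
          _ < ε₀ / 2 + ε₀ / 2 := add_lt_add (by rw [dist_comm]; exact hd1) hd2
          _ = ε₀ := by ring
      have h2 : ψ z g = c (pt (i g)) := by
        show f (z g) = c (pt (i g))
        rw [hi g]
        rfl
      calc φ y g = c (act g⁻¹ y) := (hc_eval y g).symm
        _ = c (pt (i g)) := hc_const _ _ hdy
        _ = ψ z g := h2.symm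
    · rintro a ⟨x, -, rfl⟩
      let z : G → Option ι := fun g => some (idx (act g⁻¹ x))
      have hzZ : z ∈ Z := by
        intro g
        refine ⟨fun e => idx (act (g⁻¹ * (e : G))⁻¹ x), fun e => rfl,
          act (g⁻¹ * (1 : G))⁻¹ x, hidx_mem _, fun s hs => ?_⟩
        refine ⟨act (g⁻¹ * s⁻¹)⁻¹ x, hidx_mem _, ?_⟩
        have hact : act s (act (g⁻¹ * (1 : G))⁻¹ x) = act (g⁻¹ * s⁻¹)⁻¹ x := by
          rw [← Function.comp_apply (f := act s), ← hmul]
          congr 1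
          group
        rw [hact, dist_self]
        linarith
      refine ⟨z, hzZ, ?_⟩
      funext g
      calc ψ z g = c (pt (idx (act g⁻¹ x))) := rfl
        _ = c (act g⁻¹ x) := (hc_part _ _ (hidx_mem _)).symm
        _ = φ x g := hc_eval x g
end

section
/- Let G be a countable group acting continuously on a compact metrizable zero-dimensional space X, and fix a compatible metric d on X. The action has shadowing if and only if: for every finite partition 𝒫 of X into nonempty clopen sets there exist a finite partition 𝒫' of X into nonempty clopen sets refining 𝒫 and a finite set S ⊆ G such that, whenever (x_g)_{g∈G} ⊆ X satisfies that for every g ∈ G and s ∈ S the points s · x_g and x_{s g} lie in the same member of 𝒫', there exists x ∈ X such that for every g ∈ G the points g · x and x_g lie in the same member of 𝒫. -/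
open Topology

lemma sep_lemma {X : Type} [MetricSpace X] [CompactSpace X]
    (parts : Finset (Set X)) (h : IsClopenPartition parts) :
    ∃ δ : ℝ, 0 < δ ∧ ∀ a b : X, dist a b < δ → ∃ P ∈ parts, a ∈ P ∧ b ∈ P := by
  have hcov : (Set.univ : Set X) ⊆ ⋃ P : parts, (P : Set X) := by
    intro z _
    have hz : z ∈ ⋃ P ∈ parts, P := h.2.2.symm.le (Set.mem_univ z)
    obtain ⟨P, hP, hzP⟩ := Set.mem_iUnion₂.1 hz
    exact Set.mem_iUnion.2 ⟨⟨P, hP⟩, hzP⟩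
  obtain ⟨δ, hδ, hball⟩ := lebesgue_number_lemma_of_metric isCompact_univ
    (fun P : parts => (h.1 P P.2).1.2) hcov
  refine ⟨δ, hδ, fun a b hab => ?_⟩
  obtain ⟨P, hP⟩ := hball a (Set.mem_univ a)
  exact ⟨P, P.2, hP (Metric.mem_ball_self hδ), hP (by simpa [Metric.mem_ball, dist_comm] using hab)⟩

lemma refine_lemma {X : Type} [MetricSpace X] [CompactSpace X] [TotallyDisconnectedSpace X]
    (parts : Finset (Set X)) (h : IsClopenPartition parts) (ε : ℝ) (hε : 0 < ε) :
    ∃ parts' : Finset (Set X), IsClopenPartition parts' ∧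
      (∀ P' ∈ parts', ∃ P ∈ parts, P' ⊆ P) ∧
      ∀ P' ∈ parts', ∀ a ∈ P', ∀ b ∈ P', dist a b < ε := by
  classical
  -- clopen neighborhoods of small diameter
  have hV : ∀ x : X, ∃ V : Set X, IsClopen V ∧ x ∈ V ∧ V ⊆ Metric.ball x (ε/3) :=
    fun x => compact_exists_isClopen_in_isOpen Metric.isOpen_ball
      (Metric.mem_ball_self (by linarith))
  choose V hVclopen hVmem hVsub using hV
  obtain ⟨t, ht⟩ := isCompact_univ.elim_finite_subcover V (fun x => (hVclopen x).2)
    (fun x _ => Set.mem_iUnion.2 ⟨x, hVmem x⟩)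
  -- atoms of the family {V x : x ∈ t}
  set atom : (↥t → Bool) → Set X :=
    fun σ => ⋂ i : ↥t, (if σ i then V (i : X) else (V (i : X))ᶜ) with hatom
  have hatomclopen : ∀ σ, IsClopen (atom σ) := by
    intro σ
    have : atom σ = ⋂ i ∈ (Finset.univ : Finset ↥t),
        (if σ i then V (i : X) else (V (i : X))ᶜ) := by
      simp [hatom]
    rw [this]
    refine isClopen_biInter_finset fun i _ => ?_
    by_cases hσ : σ i <;> simp [hσ, hVclopen, (hVclopen (i : X)).compl]
  have hmematom : ∀ z : X, z ∈ atom (fun i => decide (z ∈ V (i : X))) := by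
    intro z
    refine Set.mem_iInter.2 fun i => ?_
    by_cases hz : z ∈ V (i : X) <;> simp [hz]
  have hatomsub : ∀ (σ : ↥t → Bool) (i : ↥t), σ i = true → atom σ ⊆ V (i : X) := by
    intro σ i hi
    intro z hz
    have := Set.mem_iInter.1 hz i
    simpa [hi] using this
  have hatomsub' : ∀ (σ : ↥t → Bool) (i : ↥t), σ i = false → atom σ ⊆ (V (i : X))ᶜ := by
    intro σ i hi z hz
    have := Set.mem_iInter.1 hz i
    simpa [hi] using this
  -- the refined partition
  set parts' : Finset (Set X) :=
    (((Finset.univ : Finset (↥t → Bool)) ×ˢ parts).image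
      (fun p => atom p.1 ∩ p.2)).filter (fun s => s.Nonempty) with hparts'
  have hmem' : ∀ R ∈ parts', R.Nonempty ∧ ∃ σ, ∃ P ∈ parts, R = atom σ ∩ P := by
    intro R hR
    rw [hparts', Finset.mem_filter, Finset.mem_image] at hR
    obtain ⟨⟨p, hp, hpR⟩, hne⟩ := hR
    exact ⟨hne, p.1, p.2, (Finset.mem_product.1 hp).2, hpR.symm⟩
  refine ⟨parts', ⟨?_, ?_, ?_⟩, ?_, ?_⟩
  · intro R hR
    obtain ⟨hne, σ, P, hP, rfl⟩ := hmem' R hR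
    exact ⟨(hatomclopen σ).inter (h.1 P hP).1, hne⟩
  · intro R hR Q hQ hRQ
    obtain ⟨_, σ, P, hP, rfl⟩ := hmem' R hR
    obtain ⟨_, σ', P', hP', rfl⟩ := hmem' Q hQ
    by_cases hσ : σ = σ'
    · subst hσ
      have hPP' : P ≠ P' := fun e => hRQ (by rw [e])
      exact Set.disjoint_of_subset Set.inter_subset_right Set.inter_subset_right
        (h.2.1 P hP P' hP' hPP')
    · obtain ⟨i, hi⟩ := Function.ne_iff.1 hσ
      rcases Bool.eq_false_or_eq_true (σ i) with hb | hb
      · have hb' : σ' i = false := by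
          revert hi; cases σ' i <;> simp [hb]
        exact Set.disjoint_of_subset Set.inter_subset_left Set.inter_subset_left
          ((disjoint_compl_right (a := V (i:X))).mono (hatomsub σ i hb) (hatomsub' σ' i hb'))
      · have hb' : σ' i = true := by
          revert hi; cases σ' i <;> simp [hb]
        exact Set.disjoint_of_subset Set.inter_subset_left Set.inter_subset_left
          ((disjoint_compl_left (a := V (i:X))).mono (hatomsub' σ i hb) (hatomsub σ' i hb'))
  · apply Set.eq_univ_of_forall
    intro z
    have hzP : ∃ P ∈ parts, z ∈ P := by
      have := h.2.2.symm.le (Set.mem_univ z)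
      simpa using this
    obtain ⟨P, hP, hzmem⟩ := hzP
    set σ : ↥t → Bool := fun i => decide (z ∈ V (i : X)) with hσdef
    have hz : z ∈ atom σ ∩ P := ⟨hmematom z, hzmem⟩
    have hR : atom σ ∩ P ∈ parts' := by
      rw [hparts', Finset.mem_filter, Finset.mem_image]
      exact ⟨⟨(σ, P), Finset.mem_product.2 ⟨Finset.mem_univ _, hP⟩, rfl⟩, ⟨z, hz⟩⟩
    exact Set.mem_biUnion hR hz
  · intro R hR
    obtain ⟨_, σ, P, hP, rfl⟩ := hmem' R hR
    exact ⟨P, hP, Set.inter_subset_right⟩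
  · intro R hR a ha b hb
    obtain ⟨⟨z, hz⟩, σ, P, hP, rfl⟩ := hmem' R hR
    have hzt : ∃ x ∈ t, z ∈ V x := by
      have := ht (Set.mem_univ z)
      simpa using this
    obtain ⟨x, hxt, hzx⟩ := hzt
    have hσx : σ ⟨x, hxt⟩ = true := by
      cases hσ : σ ⟨x, hxt⟩
      · exact absurd hzx (hatomsub' σ ⟨x, hxt⟩ hσ hz.1)
      · rfl
    have hsub : atom σ ⊆ Metric.ball x (ε/3) :=
      (hatomsub σ ⟨x, hxt⟩ hσx).trans (hVsub x)
    have ha' := hsub ha.1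
    have hb' := hsub hb.1
    rw [Metric.mem_ball] at ha' hb'
    calc dist a b ≤ dist a x + dist x b := dist_triangle a x b
      _ < ε/3 + ε/3 := by rw [dist_comm x b]; exact add_lt_add ha' hb'
      _ < ε := by linarith

/-- Clopen-partition reformulation of shadowing for continuous actions
of countable groups on compact metrizable zero-dimensional spaces. -/
theorem shadowing_iff_clopen_partitions (G : Type) [Group G] [Countable G]
    (X : Type) [MetricSpace X] [CompactSpace X] [TotallyDisconnectedSpace X]
    (act : G → X → X) (hone : act 1 = id)
    (hmul : ∀ g h : G, act (g * h) = act g ∘ act h)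
    (hcont : ∀ g : G, Continuous (act g)) :
    HasShadowing (fun x y => dist x y) act ↔
      ∀ parts : Finset (Set X), IsClopenPartition parts →
        ∃ (parts' : Finset (Set X)) (S : Finset G),
          IsClopenPartition parts' ∧
          (∀ P' ∈ parts', ∃ P ∈ parts, P' ⊆ P) ∧
          ∀ x : G → X,
            (∀ g : G, ∀ s ∈ S, ∃ P ∈ parts', act s (x g) ∈ P ∧ x (s * g) ∈ P) →
            ∃ y : X, ∀ g : G, ∃ P ∈ parts, act g y ∈ P ∧ x g ∈ P := by
  constructor
  · intro hsh parts hparts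
    obtain ⟨δ₀, hδ₀, hsep⟩ := sep_lemma parts hparts
    obtain ⟨δ, S, hδ, hS⟩ := hsh δ₀ hδ₀
    obtain ⟨parts', hparts', href, hdiam⟩ := refine_lemma parts hparts δ hδ
    refine ⟨parts', S, hparts', href, ?_⟩
    intro x hx
    have hxd : ∀ g : G, ∀ s ∈ S, dist (act s (x g)) (x (s * g)) < δ := by
      intro g s hs
      obtain ⟨P, hP, h1, h2⟩ := hx g s hs
      exact hdiam P hP _ h1 _ h2
    obtain ⟨y, hy⟩ := hS x hxd
    refine ⟨y, fun g => ?_⟩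
    obtain ⟨P, hP, h1, h2⟩ := hsep (act g y) (x g) (by rw [dist_comm]; exact hy g)
    exact ⟨P, hP, h1, h2⟩
  · intro hp ε hε
    rcases isEmpty_or_nonempty X with hX | hX
    · exact ⟨1, ∅, one_pos, fun x _ => (hX.false (x 1)).elim⟩
    · have htriv : IsClopenPartition ({Set.univ} : Finset (Set X)) := by
        refine ⟨?_, ?_, ?_⟩
        · intro P hP
          rw [Finset.mem_singleton] at hP
          subst hP
          exact ⟨isClopen_univ, Set.univ_nonempty⟩
        · intro P hP Q hQ hPQ
          rw [Finset.mem_singleton] at hP hQ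
          exact absurd (hP.trans hQ.symm) hPQ
        · simp
      obtain ⟨parts, hparts, _, hdiam⟩ := refine_lemma _ htriv ε hε
      obtain ⟨parts', S, hparts', _, hcond⟩ := hp parts hparts
      obtain ⟨δ, hδ, hsep⟩ := sep_lemma parts' hparts'
      refine ⟨δ, S, hδ, ?_⟩
      intro x hx
      obtain ⟨y, hy⟩ := hcond x (fun g s hs => hsep _ _ (hx g s hs))
      refine ⟨y, fun g => ?_⟩
      obtain ⟨P, hP, h1, h2⟩ := hy g
      exact hdiam P hP _ h2 _ h1
end

section
/- Let G and H be countable groups, A a finite set with at least two elements, and X ⊆ A^{G∗H} a subshift of finite type over the free product G ∗ H. Then there exist a finite set B with at least two elements, subshifts of finite type V ⊆ B^G and W ⊆ B^H, and a map φ₀ : B → A such that the induced map Φ : B^{G∗H} → A^{G∗H} given by Φ(x)(g) = φ₀(x(g)) restricts to a (G∗H)-equivariant homeomorphism from the free product V ∗ W onto X. -/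
open Topology

/-!
Enlarge the defining window `E` of `X` to a finite set `T ∋ 1` that is closed under taking
suffixes of words in the letters `G ∪ H`, and take as new alphabet the `T`-blocks `B = A^T`.
On `G` and on `H` the SFTs `V`, `W` say that every block is a `T`-pattern of `X` and that
blocks at neighbouring positions `k` and `k s` agree wherever the translated windows overlap.
In the free product these overlap conditions hold for every letter, so by suffix-closedness a
block is determined by the `1`-entries of the blocks around it: `x c t = x (c t) 1`. Hence the
one-block code `p ↦ p 1` is injective on `V ∗ W`, and its image is `X` because `E ⊆ T`.
-/

section Shift

variable {Γ A : Type} [Group Γ]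

lemma shift_one (x : Γ → A) : shift 1 x = x := by
  funext h
  simp [shift]

lemma shift_shift (g g' : Γ) (x : Γ → A) : shift g (shift g' x) = shift (g * g') x := by
  funext h
  simp [shift, mul_assoc]

lemma IsSFT.isSubshift {X : Set (Γ → A)} (hX : IsSFT Γ A X) : IsSubshift Γ A X := by
  obtain ⟨E, 𝔽, hE⟩ := hX
  constructor
  · let _ : TopologicalSpace A := ⊥
    have : DiscreteTopology A := ⟨rfl⟩
    have hXeq : X = ⋂ g : Γ, (fun (x : Γ → A) (e : E) => shift g x e) ⁻¹' 𝔽 := by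
      ext x
      simp only [hE, Set.mem_iInter, Set.mem_preimage]
    rw [hXeq]
    exact isClosed_iInter fun g =>
      (isClosed_discrete 𝔽).preimage (continuous_pi fun e => continuous_apply _)
  · intro g x hx
    rw [hE] at hx ⊢
    intro g'
    simpa only [shift_shift] using hx (g' * g)

lemma mem_of_forall_block_mem_patterns {X : Set (Γ → A)} {E T : Finset Γ} {𝔽 : Set (E → A)}
    (hE : ∀ x, x ∈ X ↔ ∀ g : Γ, (fun e : E => shift g x e) ∈ 𝔽) (hET : E ⊆ T) {x : Γ → A}
    (hx : ∀ c, (fun t : T => x (c * t)) ∈ patterns T X) : x ∈ X := by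
  rw [hE]
  intro g
  obtain ⟨x', hx'X, hx'⟩ := hx g⁻¹
  have hagree : (fun e : E => shift g x e) = fun e : E => shift 1 x' e := by
    funext e
    rw [shift_one]
    exact (congrFun hx' ⟨e, hET e.2⟩).symm
  rw [hagree]
  exact (hE x').1 hx'X 1

end Shift

section SuffixClosed

variable {Γ : Type} [Group Γ]

def IsSuffixClosed (S : Set Γ) (T : Finset Γ) : Prop :=
  ∀ t ∈ T, ∃ w : List Γ, (∀ a ∈ w, a ∈ S) ∧ w.prod = t ∧ ∀ v, v <:+ w → v.prod ∈ T

lemma exists_isSuffixClosed_superset {S : Set Γ} (hS : Submonoid.closure S = ⊤)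
    (E : Finset Γ) : ∃ T : Finset Γ, 1 ∈ T ∧ E ⊆ T ∧ IsSuffixClosed S T := by
  classical
  have hword (g : Γ) : ∃ w : List Γ, (∀ a ∈ w, a ∈ S) ∧ w.prod = g :=
    Submonoid.exists_list_of_mem_closure (hS ▸ Submonoid.mem_top g)
  choose w hwS hw using hword
  let T := insert 1 (E.biUnion fun e => (w e).tails.toFinset.image List.prod)
  have mem_T {e : Γ} (he : e ∈ E) {v : List Γ} (hv : v <:+ w e) : v.prod ∈ T :=
    Finset.mem_insert_of_mem <| Finset.mem_biUnion.2
      ⟨e, he, Finset.mem_image.2 ⟨v, by simpa using hv, rfl⟩⟩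
  refine ⟨T, Finset.mem_insert_self _ _, fun e he => hw e ▸ mem_T he List.suffix_rfl, ?_⟩
  intro t ht
  rcases Finset.mem_insert.1 ht with rfl | ht
  · exact ⟨[], by simp, List.prod_nil, fun v hv => by simpa [List.suffix_nil.1 hv] using ht⟩
  · obtain ⟨e, he, hte⟩ := Finset.mem_biUnion.1 ht
    obtain ⟨v, hv, rfl⟩ := Finset.mem_image.1 hte
    have hv : v <:+ w e := by simpa using hv
    exact ⟨v, fun a ha => hwS e a (hv.subset ha), rfl, fun u hu => mem_T he (hu.trans hv)⟩

lemma IsSuffixClosed.apply_eq_apply_one {S : Set Γ} {T : Finset Γ} (hT : IsSuffixClosed S T)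
    (h1 : (1 : Γ) ∈ T) {β : Type} {x : Γ → T → β}
    (hx : ∀ c, ∀ a ∈ S, ∀ t t' : T, (t : Γ) = a * t' → x (c * a) t' = x c t)
    (c : Γ) (t : T) : x c t = x (c * t) ⟨1, h1⟩ := by
  obtain ⟨w, hwS, hwt, hwT⟩ := hT t t.2
  induction w generalizing c t with
  | nil =>
    obtain rfl : t = ⟨1, h1⟩ := Subtype.ext hwt.symm
    rw [mul_one]
  | cons a w ih =>
    have hwT' : ∀ v, v <:+ w → v.prod ∈ T := fun v hv => hwT v (hv.trans (List.suffix_cons a w))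
    let t' : T := ⟨w.prod, hwT' w List.suffix_rfl⟩
    have hta : (t : Γ) = a * t' := by rw [← hwt, List.prod_cons]
    calc x c t = x (c * a) t' := (hx c a (hwS a List.mem_cons_self) t t' hta).symm
      _ = x (c * a * t') ⟨1, h1⟩ :=
        ih (c * a) t' (fun b hb => hwS b (List.mem_cons_of_mem a hb)) rfl hwT'
      _ = x (c * t) ⟨1, h1⟩ := by rw [hta, mul_assoc]

end SuffixClosed

section BlockShift

open scoped Pointwise

variable {Γ K β : Type} [Group Γ] [Group K]

/-- `y k` stands for the `T`-block `t ↦ x (ι k * t)` of a configuration `x` over `Γ`. -/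
def blockShift (ι : K →* Γ) {T : Finset Γ} (P : Set (T → β)) : Set (K → T → β) :=
  {y | ∀ k, y k ∈ P ∧ ∀ s (t t' : T), (t : Γ) = ι s * t' → y (k * s) t' = y k t}

lemma isSFT_blockShift {ι : K →* Γ} (hι : Function.Injective ι) {T : Finset Γ}
    (P : Set (T → β)) : IsSFT K (T → β) (blockShift ι P) := by
  classical
  have hfin : (ι ⁻¹' ((T : Set Γ) * (T : Set Γ)⁻¹)).Finite :=
    (T.finite_toSet.mul T.finite_toSet.inv).preimage hι.injOn
  let F : Finset K := insert 1 hfin.toFinset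
  have h1F : (1 : K) ∈ F := Finset.mem_insert_self _ _
  have hF {s : K} {t t' : T} (h : (t : Γ) = ι s * t') : s ∈ F :=
    Finset.mem_insert_of_mem <| hfin.mem_toFinset.2
      ⟨t, t.2, (t' : Γ)⁻¹, Set.inv_mem_inv.2 t'.2, by simp [h]⟩
  refine ⟨F, {q | q ⟨1, h1F⟩ ∈ P ∧
    ∀ (s : F) (t t' : T), (t : Γ) = ι s * t' → q s t' = q ⟨1, h1F⟩ t}, fun y => ?_⟩
  simp only [blockShift, shift, Set.mem_ofPred_eq, mul_one]
  constructor
  · intro hy g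
    exact ⟨(hy g⁻¹).1, fun s t t' h => (hy g⁻¹).2 s t t' h⟩
  · intro hy k
    simpa only [inv_inv] using
      And.intro (hy k⁻¹).1 fun s t t' h => (hy k⁻¹).2 ⟨s, hF h⟩ t t' h

end BlockShift

section FreeProduct

open scoped Monoid
open Monoid.Coprod

variable {G H : Type} [Group G] [Group H]

lemma mem_freeProd_blockShift_iff {β : Type} {T : Finset (G ∗ H)} {P : Set (T → β)}
    {x : G ∗ H → T → β} :
    x ∈ freeProd (blockShift inl P) (blockShift inr P) ↔
      ∀ c, x c ∈ P ∧ ∀ a ∈ (Set.range inl ∪ Set.range inr : Set (G ∗ H)), ∀ t t' : T,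
        (t : G ∗ H) = a * t' → x (c * a) t' = x c t := by
  simp only [freeProd, blockShift, Set.mem_ofPred_eq, Set.mem_union, Set.mem_range]
  constructor
  · intro hx c
    refine ⟨by simpa using ((hx c).1 1).1, ?_⟩
    rintro a (⟨s, rfl⟩ | ⟨s, rfl⟩) t t' h
    · simpa using ((hx c).1 1).2 s t t' h
    · simpa using ((hx c).2 1).2 s t t' h
  · intro hx c
    exact ⟨fun k => ⟨(hx _).1, fun s t t' h => by
        simpa [← mul_assoc] using (hx (c * inl k)).2 _ (Or.inl ⟨s, rfl⟩) t t' h⟩,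
      fun k => ⟨(hx _).1, fun s t t' h => by
        simpa [← mul_assoc] using (hx (c * inr k)).2 _ (Or.inr ⟨s, rfl⟩) t t' h⟩⟩

variable {T : Finset (G ∗ H)}

lemma apply_eq_apply_one_of_mem_freeProd_blockShift
    (hT : IsSuffixClosed (Set.range inl ∪ Set.range inr) T) (h1 : (1 : G ∗ H) ∈ T)
    {β : Type} {P : Set (T → β)} {x : G ∗ H → T → β}
    (hx : x ∈ freeProd (blockShift inl P) (blockShift inr P))
    (c : G ∗ H) (t : T) : x c t = x (c * t) ⟨1, h1⟩ :=
  hT.apply_eq_apply_one h1 (fun c => (mem_freeProd_blockShift_iff.1 hx c).2) c t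

lemma injOn_freeProd_blockShift
    (hT : IsSuffixClosed (Set.range inl ∪ Set.range inr) T) (h1 : (1 : G ∗ H) ∈ T)
    {β : Type} (P : Set (T → β)) :
    Set.InjOn (fun (x : G ∗ H → T → β) g => x g ⟨1, h1⟩)
      (freeProd (blockShift inl P) (blockShift inr P)) := by
  intro x hx y hy hxy
  funext c t
  rw [apply_eq_apply_one_of_mem_freeProd_blockShift hT h1 hx,
    apply_eq_apply_one_of_mem_freeProd_blockShift hT h1 hy]
  exact congrFun hxy (c * t)

lemma image_freeProd_blockShift_patterns
    (hT : IsSuffixClosed (Set.range inl ∪ Set.range inr) T) (h1 : (1 : G ∗ H) ∈ T)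
    {A : Type} {X : Set (G ∗ H → A)} (hX : ∀ g, ∀ x ∈ X, shift g x ∈ X)
    {E : Finset (G ∗ H)} {𝔽 : Set (E → A)}
    (hE : ∀ x, x ∈ X ↔ ∀ g, (fun e : E => shift g x e) ∈ 𝔽) (hET : E ⊆ T) :
    (fun (x : G ∗ H → T → A) g => x g ⟨1, h1⟩) ''
      freeProd (blockShift inl (patterns T X)) (blockShift inr (patterns T X)) = X := by
  apply Set.Subset.antisymm
  · rintro _ ⟨x, hx, rfl⟩
    refine mem_of_forall_block_mem_patterns hE hET fun c => ?_
    convert (mem_freeProd_blockShift_iff.1 hx c).1 using 1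
    funext t
    exact (apply_eq_apply_one_of_mem_freeProd_blockShift hT h1 hx c t).symm
  · intro x hxX
    refine ⟨fun c t => x (c * t), mem_freeProd_blockShift_iff.2 fun c => ⟨?_, ?_⟩, ?_⟩
    · exact ⟨shift c⁻¹ x, hX _ x hxX, by simp [shift]⟩
    · intro a _ t t' h
      simp only [h, mul_assoc]
    · funext c
      simp

end FreeProduct

theorem sft_over_free_product_decomposition_general (G H : Type) [Group G] [Group H]
    (A : Type) [Fintype A] [Nontrivial A]
    (X : Set (Monoid.Coprod G H → A))
    (hX : IsSubshift (Monoid.Coprod G H) A X)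
    (hSFT : IsSFT (Monoid.Coprod G H) A X) :
    ∃ (B : Type) (_ : Fintype B) (_ : Nontrivial B)
      (V : Set (G → B)) (W : Set (H → B)) (φ₀ : B → A),
      IsSubshift G B V ∧ IsSFT G B V ∧ IsSubshift H B W ∧ IsSFT H B W ∧
      (∀ (g : Monoid.Coprod G H) (x : Monoid.Coprod G H → B),
        (fun h : Monoid.Coprod G H => φ₀ (shift g x h)) =
          shift g (fun h : Monoid.Coprod G H => φ₀ (x h))) ∧
      Set.InjOn
        (fun (x : Monoid.Coprod G H → B) (g : Monoid.Coprod G H) => φ₀ (x g))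
        (freeProd V W) ∧
      (fun (x : Monoid.Coprod G H → B) (g : Monoid.Coprod G H) => φ₀ (x g)) ''
        freeProd V W = X := by
  classical
  obtain ⟨E, 𝔽, hE⟩ := hSFT
  obtain ⟨T, h1, hET, hT⟩ :=
    exists_isSuffixClosed_superset Monoid.Coprod.mclosure_range_inl_union_inr E
  have : Nonempty T := ⟨⟨1, h1⟩⟩
  have hV := isSFT_blockShift Monoid.Coprod.inl_injective (patterns T X)
  have hW := isSFT_blockShift Monoid.Coprod.inr_injective (patterns T X)
  exact ⟨T → A, inferInstance, inferInstance, _, _, fun p => p ⟨1, h1⟩,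
    hV.isSubshift, hV, hW.isSubshift, hW, fun _ _ => rfl,
    injOn_freeProd_blockShift hT h1 _, image_freeProd_blockShift_patterns hT h1 hX.2 hE hET⟩

/-- Every SFT over a free product `G ∗ H` is, via a one-block code,
equivariantly homeomorphic to a free product of an SFT over `G` with an SFT over `H`. -/
theorem sft_over_free_product_decomposition (G H : Type) [Group G] [Group H]
    [Countable G] [Countable H]
    (A : Type) [Fintype A] [Nontrivial A]
    (X : Set (Monoid.Coprod G H → A))
    (hX : IsSubshift (Monoid.Coprod G H) A X)
    (hSFT : IsSFT (Monoid.Coprod G H) A X) :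
    ∃ (B : Type) (_ : Fintype B) (_ : Nontrivial B)
      (V : Set (G → B)) (W : Set (H → B)) (φ₀ : B → A),
      IsSubshift G B V ∧ IsSFT G B V ∧ IsSubshift H B W ∧ IsSFT H B W ∧
      (∀ (g : Monoid.Coprod G H) (x : Monoid.Coprod G H → B),
        (fun h : Monoid.Coprod G H => φ₀ (shift g x h)) =
          shift g (fun h : Monoid.Coprod G H => φ₀ (x h))) ∧
      Set.InjOn
        (fun (x : Monoid.Coprod G H → B) (g : Monoid.Coprod G H) => φ₀ (x g))
        (freeProd V W) ∧
      (fun (x : Monoid.Coprod G H → B) (g : Monoid.Coprod G H) => φ₀ (x g)) ''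
        freeProd V W = X :=
  sft_over_free_product_decomposition_general G H A X hX hSFT
end

section
/- Let G be a countable group and A a finite set with at least two elements. A subshift X ⊆ A^G is isolated if and only if it is of finite type and there exists a finite partition 𝒫 of X into nonempty subsets that are clopen in X such that no nonempty proper subshift Y ⊊ X intersects every member of 𝒫. -/
open Topology

lemma clopen_determined {G A : Type} [Fintype A] (X P : Set (G → A))
    (hXc : letI : TopologicalSpace A := ⊥; IsClosed X) (hPX : P ⊆ X)
    (hP : letI : TopologicalSpace A := ⊥; IsClopen (Subtype.val ⁻¹' P : Set X)) :
    ∃ F : Finset G, ∀ x ∈ P, ∀ y ∈ X, (∀ g ∈ F, y g = x g) → y ∈ P := by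
  letI : TopologicalSpace A := ⊥
  haveI : DiscreteTopology A := ⟨rfl⟩
  haveI : DecidableEq G := Classical.decEq G
  -- P is compact
  haveI : CompactSpace (↥X) := isCompact_iff_compactSpace.mp hXc.isCompact
  have hPcomp : IsCompact P := by
    have h1 : IsCompact ((Subtype.val ⁻¹' P : Set X)) := hP.1.isCompact
    have h2 := h1.image continuous_subtype_val
    rwa [Subtype.image_preimage_coe, Set.inter_eq_self_of_subset_right hPX] at h2
  -- P is relatively open: ∃ open U with U ∩ X = P
  obtain ⟨U, hUopen, hUeq⟩ := isOpen_induced_iff.mp hP.2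
  have hPU : P ⊆ U := fun x hx => by
    have := Set.ext_iff.mp hUeq ⟨x, hPX hx⟩
    exact this.mpr hx
  have hUX : ∀ y ∈ X, y ∈ U → y ∈ P := fun y hy hyU =>
    (Set.ext_iff.mp hUeq ⟨y, hy⟩).mp hyU
  -- basic nbhds
  have hch : ∀ x (hx : x ∈ P), ∃ (I : Finset G) (u : G → Set A),
      x ∈ (I : Set G).pi u ∧ (I : Set G).pi u ⊆ U := by
    intro x hx
    obtain ⟨I, u, h1, h2⟩ := isOpen_pi_iff.mp hUopen x (hPU hx)
    exact ⟨I, u, fun a ha => (h1 a ha).2, h2⟩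
  choose Iof uof hmem hsub using hch
  have hnhds : ∀ x (hx : x ∈ P), (((Iof x hx : Set G)).pi (uof x hx)) ∈ nhds x := by
    intro x hx
    refine IsOpen.mem_nhds ?_ (hmem x hx)
    refine isOpen_set_pi (Finset.finite_toSet _) ?_
    intro a _; exact isOpen_discrete _
  obtain ⟨t, ht⟩ := hPcomp.elim_nhds_subcover' (fun x hx => ((Iof x hx : Set G)).pi (uof x hx)) hnhds
  refine ⟨t.sup (fun z => Iof z.1 z.2), ?_⟩
  intro x hx y hy hagree
  obtain ⟨z, hzmem⟩ := Set.mem_iUnion.mp (ht hx)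
  obtain ⟨hzt, hxz⟩ := Set.mem_iUnion.mp hzmem
  apply hUX y hy
  apply hsub z.1 z.2
  intro a ha
  have haF : a ∈ t.sup (fun z => Iof z.1 z.2) :=
    Finset.mem_of_subset (Finset.le_sup hzt) ha
  rw [hagree a haF]
  exact hxz a ha

/-- A subshift is isolated iff it is of finite type and admits a finite
partition into nonempty relatively clopen sets such that no nonempty proper subshift
meets every member of the partition. -/
theorem isolated_iff_partition_minimal (G : Type) [Group G] [Countable G]
    (A : Type) [Fintype A] [Nontrivial A]
    (X : Set (G → A)) (hX : IsSubshift G A X) :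
    IsIsolated G A X ↔
      (IsSFT G A X ∧ ∃ parts : Finset (Set (G → A)), IsClopenPartitionIn X parts ∧
        ¬ ∃ Y : Set (G → A), IsSubshift G A Y ∧ Y.Nonempty ∧ Y ⊂ X ∧
          ∀ P ∈ parts, (Y ∩ P).Nonempty) := by
  classical
  letI : TopologicalSpace A := ⊥
  haveI : DiscreteTopology A := ⟨rfl⟩
  constructor
  · rintro ⟨hSFT, F, hF⟩
    refine ⟨hSFT, ?_⟩
    set φ : (↥F → A) → Set (G → A) :=
      fun p => {x | x ∈ X ∧ ∀ f : ↥F, x (f : G) = p f} with hφ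
    refine ⟨((Set.toFinite (patterns F X)).toFinset).image φ, ⟨?_, ?_, ?_⟩, ?_⟩
    · -- nonempty, subset, clopen
      intro P hP
      obtain ⟨p, hp, rfl⟩ := Finset.mem_image.mp hP
      rw [Set.Finite.mem_toFinset] at hp
      obtain ⟨x, hxX, hxp⟩ := hp
      refine ⟨⟨x, hxX, fun f => congrFun hxp f⟩, fun z hz => hz.1, ?_⟩
      have heq : (Subtype.val ⁻¹' (φ p) : Set X) =
          (fun x : X => fun f : ↥F => x.1 (f : G)) ⁻¹' {p} := by
        ext z
        simp only [Set.mem_preimage, Set.mem_singleton_iff, hφ, Set.mem_setOf_eq]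
        constructor
        · intro h; exact funext h.2
        · intro h; exact ⟨z.2, fun f => congrFun h f⟩
      rw [heq]
      refine (isClopen_discrete {p}).preimage ?_
      exact continuous_pi fun f => (continuous_apply (f : G)).comp continuous_subtype_val
    · -- disjoint
      intro P hP Q hQ hne
      obtain ⟨p, hp, rfl⟩ := Finset.mem_image.mp hP
      obtain ⟨q, hq, rfl⟩ := Finset.mem_image.mp hQ
      have hpq : p ≠ q := fun h => hne (by rw [h])
      refine Set.disjoint_left.mpr ?_
      intro x hxp hxq
      exact hpq (funext fun f => (hxp.2 f).symm.trans (hxq.2 f))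
    · -- union
      apply Set.Subset.antisymm
      · intro x hx
        obtain ⟨P, hPmem, hxP⟩ := Set.mem_iUnion₂.mp hx
        obtain ⟨p, _, rfl⟩ := Finset.mem_image.mp hPmem
        exact hxP.1
      · intro x hx
        refine Set.mem_iUnion₂.mpr ⟨φ (fun f => x (f : G)), ?_, hx, fun f => rfl⟩
        refine Finset.mem_image.mpr ⟨fun f => x (f : G), ?_, rfl⟩
        rw [Set.Finite.mem_toFinset]
        exact ⟨x, hx, rfl⟩
    · -- minimality
      rintro ⟨Y, hYsub, hYne, hYss, hYmeet⟩
      apply hF Y hYsub hYss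
      apply Set.Subset.antisymm
      · exact Set.image_mono hYss.subset
      · rintro p ⟨x, hxX, rfl⟩
        have hmem : φ (fun f => x (f : G)) ∈
            ((Set.toFinite (patterns F X)).toFinset).image φ := by
          refine Finset.mem_image.mpr ⟨fun f => x (f : G), ?_, rfl⟩
          rw [Set.Finite.mem_toFinset]
          exact ⟨x, hxX, rfl⟩
        obtain ⟨y, hyY, hyP⟩ := hYmeet _ hmem
        exact ⟨y, hyY, funext fun f => hyP.2 f⟩
  · rintro ⟨hSFT, parts, hpart, hmin⟩
    obtain ⟨hclop, hdisj, hcover⟩ := hpart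
    refine ⟨hSFT, ?_⟩
    have hch : ∀ P (hP : P ∈ parts), ∃ F : Finset G,
        ∀ x ∈ P, ∀ y ∈ X, (∀ g ∈ F, y g = x g) → y ∈ P := by
      intro P hP
      exact clopen_determined X P hX.1 (hclop P hP).2.1 (hclop P hP).2.2
    choose Fof hFof using hch
    set F' : Finset G := parts.attach.sup (fun z => Fof z.1 z.2) with hF'
    refine ⟨F', ?_⟩
    intro Y hYsub hYss hpat
    apply hmin
    obtain ⟨x0, hx0X, _⟩ := Set.exists_of_ssubset hYss
    have hp0 : (fun f : ↥F' => x0 (f : G)) ∈ patterns F' Y := by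
      rw [hpat]; exact ⟨x0, hx0X, rfl⟩
    obtain ⟨y0, hy0Y, _⟩ := hp0
    refine ⟨Y, hYsub, ⟨y0, hy0Y⟩, hYss, ?_⟩
    intro P hP
    obtain ⟨x, hxP⟩ := (hclop P hP).1
    have hxX : x ∈ X := (hclop P hP).2.1 hxP
    have hpx : (fun f : ↥F' => x (f : G)) ∈ patterns F' Y := by
      rw [hpat]; exact ⟨x, hxX, rfl⟩
    obtain ⟨y, hyY, hyeq⟩ := hpx
    refine ⟨y, hyY, ?_⟩
    apply hFof P hP x hxP y (hYss.subset hyY)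
    intro g hg
    have hle : Fof P hP ≤ F' :=
      Finset.le_sup (f := fun z : {x // x ∈ parts} => Fof z.1 z.2)
        (Finset.mem_attach parts ⟨P, hP⟩)
    have hgF : g ∈ F' := hle hg
    exact congrFun hyeq ⟨g, hgF⟩
end

section
/- Let G be a countable group and A a finite set with at least two elements. Every projectively isolated subshift X ⊆ A^G is sofic. -/
open Topology

/-! Let `Y`, `F` and the block code `Φ` witness projective isolation of `X`. The SFT `Z` of all
configurations whose `F`-patterns, at every position, occur in `Y` contains the shift-invariant
`Y`, so `Z_F = Y_F`; projective isolation then gives `Φ(Z) = X`, and a sliding block code is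
continuous and equivariant. -/

section Patterns

variable {G B : Type} [Group G]

theorem shift_one_s17 (x : G → B) : shift 1 x = x := by
  funext h
  simp [shift]

theorem shift_shift_s17 (g k : G) (x : G → B) : shift k (shift g x) = shift (k * g) x := by
  funext h
  simp [shift, mul_assoc]

def sftOfPatterns (F : Finset G) (P : Set (F → B)) : Set (G → B) :=
  {x | ∀ g : G, (fun e : F => shift g x (e : G)) ∈ P}

theorem isSFT_sftOfPatterns (F : Finset G) (P : Set (F → B)) :
    IsSFT G B (sftOfPatterns F P) :=
  ⟨F, P, fun _ => Iff.rfl⟩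

theorem isSubshift_sftOfPatterns (F : Finset G) (P : Set (F → B)) :
    IsSubshift G B (sftOfPatterns F P) := by
  refine ⟨?_, fun g x hx k => ?_⟩
  · let _ : TopologicalSpace B := ⊥
    have : DiscreteTopology B := ⟨rfl⟩
    have hpatternAt : ∀ g : G, Continuous fun x : G → B => fun e : F => shift g x (e : G) :=
      fun g => continuous_pi fun e => continuous_apply _
    rw [show sftOfPatterns F P = ⋂ g : G, (fun x : G → B => fun e : F => shift g x (e : G)) ⁻¹' P
      by ext; simp [sftOfPatterns]]
    exact isClosed_iInter fun g => (isClosed_discrete P).preimage (hpatternAt g)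
  · simpa only [shift_shift_s17] using hx (k * g)

theorem subset_sftOfPatterns {Y : Set (G → B)} (hY : ∀ g : G, ∀ y ∈ Y, shift g y ∈ Y)
    (F : Finset G) : Y ⊆ sftOfPatterns F (patterns F Y) :=
  fun y hy g => ⟨shift g y, hY g y hy, rfl⟩

theorem patterns_sftOfPatterns {Y : Set (G → B)} (hY : ∀ g : G, ∀ y ∈ Y, shift g y ∈ Y)
    (F : Finset G) : patterns F (sftOfPatterns F (patterns F Y)) = patterns F Y := by
  refine (Set.image_mono (subset_sftOfPatterns hY F)).antisymm' ?_
  rintro p ⟨x, hx, rfl⟩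
  have hx₁ := hx 1
  rwa [shift_one_s17] at hx₁

end Patterns

section SlidingBlock

variable {G A B : Type} [Group G]

theorem continuousOnD_slidingBlock (D : Finset G) (f : (D → B) → A) (Z : Set (G → B)) :
    ContinuousOnD (slidingBlock D f) Z := by
  let _ : TopologicalSpace A := ⊥
  let _ : TopologicalSpace B := ⊥
  have : DiscreteTopology A := ⟨rfl⟩
  have : DiscreteTopology B := ⟨rfl⟩
  refine Continuous.continuousOn (continuous_pi fun g => ?_)
  exact continuous_of_discreteTopology.comp (continuous_pi fun d => continuous_apply _)

theorem slidingBlock_shift (D : Finset G) (f : (D → B) → A) (g : G) (y : G → B) :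
    slidingBlock D f (shift g y) = shift g (slidingBlock D f y) := by
  funext h
  simp [slidingBlock, shift, mul_assoc]

end SlidingBlock

theorem projIsolated_is_sofic_general (G : Type) [Group G]
    (A : Type)
    (X : Set (G → A))
    (hproj : ProjIsolated G A X) :
    IsSofic G A X := by
  obtain ⟨B, hBfin, hBnontriv, Y, F, D, f, hY, -, hiso⟩ := hproj
  set Z := sftOfPatterns F (patterns F Y)
  have hZ : IsSubshift G B Z := isSubshift_sftOfPatterns F _
  refine ⟨B, hBfin, hBnontriv, Z, slidingBlock D f, hZ, isSFT_sftOfPatterns F _,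
    continuousOnD_slidingBlock D f Z, fun g z _ => slidingBlock_shift D f g z, ?_⟩
  exact hiso Z hZ (patterns_sftOfPatterns hY.2 F)

/-- Every projectively isolated subshift is sofic. -/
theorem projIsolated_is_sofic (G : Type) [Group G] [Countable G]
    (A : Type) [Fintype A] [Nontrivial A]
    (X : Set (G → A)) (hX : IsSubshift G A X)
    (hproj : ProjIsolated G A X) :
    IsSofic G A X :=
  projIsolated_is_sofic_general G A X hproj
end

section
/- Let G be a countable group, A a finite set with at least two elements, and X ⊆ A^G a projectively isolated subshift, witnessed by a finite set B with at least two elements, a subshift Y ⊆ B^G, finite sets F, D ⊆ G, and a block map f : (D → B) → A as in the definition. Then there exist a finite set B' with at least two elements, a subshift Y' ⊆ (B')^G that is G-equivariantly homeomorphic to Y, a finite set F' ⊆ G, and a map P₀ : B' → A such that the induced one-block map P : (B')^G → A^G, P(y)(g) = P₀(y(g)), satisfies P(Y') = X and P(Z) = X for every subshift Z ⊆ (B')^G with Z_{F'} = Y'_{F'}. -/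
open Topology

/-- Higher block map: `obHB E y g = (e ↦ y (g * e))`. -/
def obHB {G B : Type} [Group G] (E : Finset G) (y : G → B) : G → (E → B) :=
  fun g e => y (g * (e : G))

/-- Projection back: evaluate the block at the identity coordinate. -/
def obPr {G B : Type} [Group G] (E : Finset G) (h1 : (1 : G) ∈ E)
    (z : G → (E → B)) : G → B :=
  fun g => z g ⟨1, h1⟩

/-- A projectively isolated subshift is witnessed, up to equivariant
homeomorphism of the witnessing subshift, by a one-block map. -/
theorem projIsolated_witnessed_by_one_block (G : Type) [Group G] [Countable G]
    (A : Type) [Fintype A] [Nontrivial A] (X : Set (G → A))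
    (B : Type) [Fintype B] [Nontrivial B] (Y : Set (G → B))
    (F D : Finset G) (f : (D → B) → A)
    (hY : IsSubshift G B Y)
    (him : slidingBlock D f '' Y = X)
    (hiso : ∀ Z : Set (G → B), IsSubshift G B Z → patterns F Z = patterns F Y →
      slidingBlock D f '' Z = X) :
    ∃ (B' : Type) (_ : Fintype B') (_ : Nontrivial B') (Y' : Set (G → B'))
      (e : (G → B') → (G → B)) (F' : Finset G) (P₀ : B' → A),
      IsSubshift G B' Y' ∧
      ContinuousOnD e Y' ∧ EquivariantOn e Y' ∧ Set.InjOn e Y' ∧ e '' Y' = Y ∧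
      (fun (y : G → B') (g : G) => P₀ (y g)) '' Y' = X ∧
      (∀ Z : Set (G → B'), IsSubshift G B' Z → patterns F' Z = patterns F' Y' →
        (fun (y : G → B') (g : G) => P₀ (y g)) '' Z = X) := by
  classical
  set E : Finset G := insert (1 : G) D with hEdef
  have h1E : (1 : G) ∈ E := Finset.mem_insert_self 1 D
  have hDE : ∀ d : G, d ∈ D → d ∈ E := fun d hd => Finset.mem_insert_of_mem hd
  haveI : Nonempty (↥E) := ⟨⟨1, h1E⟩⟩
  set ι1 : ↥E := ⟨1, h1E⟩ with hι1
  set Y' : Set (G → (↥E → B)) := obHB E '' Y with hY'def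
  set P₀ : (↥E → B) → A := fun b => f (fun d => b ⟨(d : G), hDE _ d.2⟩) with hP₀
  set F' : Finset G := F ∪ E with hF'def
  -- basic identities
  have hπH : ∀ y : G → B, obPr E h1E (obHB E y) = y := by
    intro y; funext g
    show y (g * (1 : G)) = y g
    rw [mul_one]
  have hHshift : ∀ (g : G) (y : G → B), obHB E (shift g y) = shift g (obHB E y) := by
    intro g y; funext h e
    show y (g⁻¹ * (h * (e : G))) = y (g⁻¹ * h * (e : G))
    rw [mul_assoc]
  -- continuity of the projection
  have hπcont : (letI : TopologicalSpace B := ⊥;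
      letI : TopologicalSpace (↥E → B) := ⊥;
      Continuous (obPr E h1E (B := B))) := by
    letI : TopologicalSpace B := ⊥
    letI : TopologicalSpace (↥E → B) := ⊥
    haveI : DiscreteTopology (↥E → B) := ⟨rfl⟩
    exact continuous_pi fun g =>
      (continuous_of_discreteTopology (f := fun b : ↥E → B => b ι1)).comp
        (continuous_apply g)
  -- Y' is a subshift
  have hY'sub : IsSubshift G (↥E → B) Y' := by
    constructor
    · letI tB' : TopologicalSpace (↥E → B) := ⊥
      letI tB : TopologicalSpace B := ⊥
      haveI : DiscreteTopology (↥E → B) := ⟨rfl⟩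
      haveI : DiscreteTopology B := ⟨rfl⟩
      have hYc : IsClosed Y := hY.1
      have hset : Y' = (obPr E h1E ⁻¹' Y) ∩
          ⋂ (g : G) (d : ↥D), {z : G → (↥E → B) |
            z g ⟨(d : G), hDE _ d.2⟩ = z (g * (d : G)) ι1} := by
        ext z
        constructor
        · rintro ⟨y, hy, rfl⟩
          refine ⟨by rw [Set.mem_preimage, hπH]; exact hy, ?_⟩
          simp only [Set.mem_iInter, Set.mem_setOf_eq]
          intro g d
          show y (g * (d : G)) = y (g * (d : G) * 1)
          rw [mul_one]
        · rintro ⟨hπ, hC⟩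
          simp only [Set.mem_iInter, Set.mem_setOf_eq] at hC
          refine ⟨obPr E h1E z, hπ, ?_⟩
          funext g e
          rcases e with ⟨x, hx⟩
          rcases Finset.mem_insert.mp hx with rfl | hxD
          · show z (g * 1) ι1 = z g ⟨1, hx⟩
            rw [mul_one]
          · exact (hC g ⟨x, hxD⟩).symm
      rw [hset]
      refine (hYc.preimage hπcont).inter ?_
      refine isClosed_iInter fun g => isClosed_iInter fun d => ?_
      exact isClosed_eq
        ((continuous_of_discreteTopology
          (f := fun b : ↥E → B => b ⟨(d : G), hDE _ d.2⟩)).comp (continuous_apply g))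
        ((continuous_of_discreteTopology
          (f := fun b : ↥E → B => b ι1)).comp (continuous_apply (g * (d : G))))
    · rintro g x ⟨y, hy, rfl⟩
      exact ⟨shift g y, hY.2 g y hy, (hHshift g y)⟩
  -- the key isolation claim
  have key : ∀ Z : Set (G → (↥E → B)), IsSubshift G (↥E → B) Z →
      patterns F' Z = patterns F' Y' →
      (fun (y : G → (↥E → B)) (g : G) => P₀ (y g)) '' Z = X := by
    intro Z hZ hpat
    have hFsub : ∀ s : G, s ∈ F → s ∈ F' := fun s hs => Finset.mem_union_left _ hs
    have hEsub : ∀ s : G, s ∈ E → s ∈ F' := fun s hs => Finset.mem_union_right _ hs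
    -- consistency of elements of Z
    have hcons : ∀ z ∈ Z, ∀ (g : G) (d : ↥D),
        z g ⟨(d : G), hDE _ d.2⟩ = z (g * (d : G)) ι1 := by
      intro z hz g d
      have hw : shift g⁻¹ z ∈ Z := hZ.2 g⁻¹ z hz
      have hwpat : (fun s : ↥F' => shift g⁻¹ z (s : G)) ∈ patterns F' Y' := by
        rw [← hpat]; exact ⟨shift g⁻¹ z, hw, rfl⟩
      obtain ⟨y', ⟨y, hy, rfl⟩, heq⟩ := hwpat
      have h1 := congrFun (congrFun heq ⟨1, hEsub 1 h1E⟩) ⟨(d : G), hDE _ d.2⟩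
      have h2 := congrFun (congrFun heq ⟨(d : G), hEsub _ (hDE _ d.2)⟩) ι1
      simp only [obHB, shift, inv_inv, mul_one, one_mul, hι1] at h1 h2 ⊢
      rw [← h1, h2]
    -- the projected set is a subshift
    have hπZsub : IsSubshift G B (obPr E h1E '' Z) := by
      constructor
      · letI tB : TopologicalSpace B := ⊥
        letI tB' : TopologicalSpace (↥E → B) := ⊥
        haveI : DiscreteTopology B := ⟨rfl⟩
        haveI : DiscreteTopology (↥E → B) := ⟨rfl⟩
        have hZc : IsClosed Z := hZ.1
        exact (hZc.isCompact.image hπcont).isClosed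
      · rintro g x ⟨z, hz, rfl⟩
        exact ⟨shift g z, hZ.2 g z hz, rfl⟩
    -- patterns agree on F
    have hpatF : patterns F (obPr E h1E '' Z) = patterns F Y := by
      apply Set.Subset.antisymm
      · rintro p ⟨x, ⟨z, hz, rfl⟩, rfl⟩
        have hm : (fun s : ↥F' => z (s : G)) ∈ patterns F' Y' := by
          rw [← hpat]; exact ⟨z, hz, rfl⟩
        obtain ⟨y', ⟨y, hy, rfl⟩, heq⟩ := hm
        refine ⟨y, hy, ?_⟩
        funext s
        have h1 := congrFun (congrFun heq ⟨(s : G), hFsub _ s.2⟩) ι1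
        simp only [obHB, hι1, mul_one] at h1
        exact h1
      · rintro p ⟨y, hy, rfl⟩
        have hm : (fun s : ↥F' => obHB E y (s : G)) ∈ patterns F' Z := by
          rw [hpat]; exact ⟨obHB E y, ⟨y, hy, rfl⟩, rfl⟩
        obtain ⟨z, hz, heq⟩ := hm
        refine ⟨obPr E h1E z, ⟨z, hz, rfl⟩, ?_⟩
        funext s
        have h1 := congrFun (congrFun heq ⟨(s : G), hFsub _ s.2⟩) ι1
        simp only [obHB, hι1, mul_one] at h1
        exact h1
      -- the one-block map factors through the projection
    have hPs : ∀ z ∈ Z, (fun g => P₀ (z g)) = slidingBlock D f (obPr E h1E z) := by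
      intro z hz; funext g
      show f (fun d => z g ⟨(d : G), hDE _ d.2⟩) = f (fun d => z (g * (d : G)) ι1)
      congr 1; funext d
      exact hcons z hz g d
    have himg : (fun (y : G → (↥E → B)) (g : G) => P₀ (y g)) '' Z
        = slidingBlock D f '' (obPr E h1E '' Z) := by
      rw [← Set.image_comp]
      exact Set.image_congr fun z hz => hPs z hz
    rw [himg]
    exact hiso _ hπZsub hpatF
  refine ⟨(↥E → B), inferInstance, inferInstance, Y', obPr E h1E, F', P₀,
    hY'sub, ?_, fun g z _ => rfl, ?_, ?_, key Y' hY'sub rfl, key⟩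
  · -- continuity on Y'
    show (letI : TopologicalSpace B := ⊥; letI : TopologicalSpace (↥E → B) := ⊥;
      ContinuousOn (obPr E h1E) Y')
    letI : TopologicalSpace B := ⊥
    letI : TopologicalSpace (↥E → B) := ⊥
    exact hπcont.continuousOn
  · -- injectivity on Y'
    rintro a ⟨ya, _, rfl⟩ b ⟨yb, _, rfl⟩ hab
    rw [hπH ya, hπH yb] at hab
    rw [hab]
  · -- image is Y
    rw [hY'def, ← Set.image_comp]
    have : obPr E h1E (B := B) ∘ obHB E = id := funext hπH
    rw [this, Set.image_id]
end
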